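/- Let U and V be primitive strings of length ≥ 2 over a linearly ordered alphabet, let 1 ≤ i ≤ |U| and 1 ≤ j ≤ |V| with U[i] = V[j] = c, and suppose position i is cyclic L-type in U and position j is cyclic S-type in V. Then conj_i(U) ≺_ω c ≺_ω conj_j(V), where c is regarded as a string of length 1. -/

import Mathlib

/-- `listPow S k` is the `k`-fold concatenation `S^k` of the string `S`. -/
def listPow {α : Type*} (S : List α) : ℕ → List α
  | 0 => []
  | n + 1 => S ++ listPow S n

/-- A string is primitive if `S = R^k` implies `S = R` and `k = 1`. -/
def IsPrimitiveStr {α : Type*} (S : List α) : Prop :=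
  S ≠ [] ∧ ∀ (R : List α) (k : ℕ), S = listPow R k → S = R ∧ k = 1

/-- The length of the primitive root of `S`: the least positive `d` such that
`S` is the `(|S|/d)`-th power of its length-`d` prefix. -/
noncomputable def rootLen {α : Type*} (S : List α) : ℕ :=
  sInf {d | 0 < d ∧ listPow (S.take d) (S.length / d) = S}

/-- The primitive root of a (nonempty) string `S`. -/
noncomputable def listRoot {α : Type*} (S : List α) : List α := S.take (rootLen S)

/-- `omegaSeq S hS` is the infinite sequence `S^ω` obtained by repeating the
nonempty string `S` forever; `omegaSeq S hS n = S[(n mod |S|) + 1]` (1-based). -/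
def omegaSeq {α : Type*} (S : List α) (hS : S ≠ []) (n : ℕ) : α :=
  S.get ⟨n % S.length, Nat.mod_lt n (List.length_pos_iff.mpr hS)⟩

/-- Lexicographic order on infinite sequences: they differ somewhere and at the
first differing position the left one is smaller. -/
def SeqLexLt {α : Type*} [LinearOrder α] (f g : ℕ → α) : Prop :=
  ∃ n, (∀ m, m < n → f m = g m) ∧ f n < g n

/-- The ω-order on nonempty strings: `S ≺_ω T` iff either `root S = root T` and
`|S| < |T|`, or `S^ω <_lex T^ω`. -/
def OmegaLt {α : Type*} [LinearOrder α] (S T : List α) : Prop :=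
  ∃ (hS : S ≠ []) (hT : T ≠ []),
    (listRoot S = listRoot T ∧ S.length < T.length) ∨
      SeqLexLt (omegaSeq S hS) (omegaSeq T hT)

/-- `conj T i = T[i..n]T[1..i-1]`, the `i`-th rotation (conjugate) of `T`
(1-based index, taken cyclically). -/
def conj {α : Type*} (T : List α) (i : ℕ) : List α := T.rotate (i - 1)

theorem conj_ne_nil {α : Type*} {T : List α} (hT : T ≠ []) (i : ℕ) : conj T i ≠ [] := by
  intro h
  apply hT
  have h' := congrArg List.length h
  simp only [conj, List.length_rotate, List.length_nil] at h'
  exact List.length_eq_zero_iff.mp h'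

theorem listPow_ne_nil {α : Type*} {S : List α} (hS : S ≠ []) {r : ℕ} (hr : 1 ≤ r) :
    listPow S r ≠ [] := by
  cases r with
  | zero => omega
  | succ n =>
    intro h
    exact hS (List.append_eq_nil_iff.mp h).1

/-- Lexicographic order on finite strings. -/
def LexLt {α : Type*} [LinearOrder α] (U V : List α) : Prop := List.Lex (· < ·) U V

/-- Position `i` of `T` is cyclic S-type if `conj_i(T) <_lex conj_{i+1}(T)`. -/
def SType {α : Type*} [LinearOrder α] (T : List α) (i : ℕ) : Prop :=
  LexLt (conj T i) (conj T (i + 1))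

/-- Position `i` of `T` is cyclic L-type if `conj_i(T) >_lex conj_{i+1}(T)`. -/
def LType {α : Type*} [LinearOrder α] (T : List α) (i : ℕ) : Prop :=
  LexLt (conj T (i + 1)) (conj T i)

/-- `cyc T hT i` is the character `T[i]`, 1-based and taken cyclically. -/
def cyc {α : Type*} (T : List α) (hT : T ≠ []) (i : ℕ) : α := omegaSeq T hT (i - 1)

/-- A cyclic S-type position `i` is LMS if position `i-1` (cyclically, so
position `0` means `n`) is cyclic L-type. -/
def IsLMS {α : Type*} [LinearOrder α] (T : List α) (i : ℕ) : Prop :=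
  SType T i ∧ LType T (if i = 1 then T.length else i - 1)

/-- The cyclic distance from position `i` to the first LMS position of `T`
strictly after `i` (in cyclic order). -/
noncomputable def lmsDist {α : Type*} [LinearOrder α] (T : List α) (i : ℕ) : ℕ :=
  sInf {m | 0 < m ∧ IsLMS T ((i + m - 1) % T.length + 1)}

/-- The LMS-prefix of `conj_i(T)`: the cyclic factor of `T` from position `i`
to the first LMS position strictly after `i`, inclusive at both ends. -/
noncomputable def lmsPrefix {α : Type*} [LinearOrder α] (T : List α) (i : ℕ) : List α :=
  (conj T i ++ conj T i).take (lmsDist T i + 1)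

/-- The LMS-order: `U <_LMS V` iff `V` is a proper prefix of `U`, or neither is
a prefix of the other and `U <_lex V`. -/
def LMSLt {α : Type*} [LinearOrder α] (U V : List α) : Prop :=
  (V <+: U ∧ V ≠ U) ∨ (¬ U <+: V ∧ ¬ V <+: U ∧ LexLt U V)

/-!
Write `conj_i(U) = c :: t`. The cyclic L-type condition says that the rotation `t ++ [c]` is
lexicographically smaller than `c :: t`. Let `d` be the first letter of `conj_i(U)` that is not `c`;
it exists, because a rotation of a constant word is the word itself. If `conj_i(U) = c^(k+1) d r`,
the two words first differ where `d` is compared with `c`, so `d < c`. Then `conj_i(U)^ω` and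
`c^ω` first differ at `d`, which gives `conj_i(U) ≺_ω c`. The S-type case is symmetric.
-/

open List

section Words

variable {α : Type*}

theorem eq_replicate_or_eq_replicate_append_cons_of_ne (c : α) :
    ∀ l : List α, (∃ k, l = replicate k c) ∨ ∃ k d r, d ≠ c ∧ l = replicate k c ++ d :: r
  | [] => .inl ⟨0, rfl⟩
  | a :: l => by
    by_cases ha : a = c
    · subst ha
      rcases eq_replicate_or_eq_replicate_append_cons_of_ne a l with ⟨k, rfl⟩ | ⟨k, d, r, hd, rfl⟩
      · exact .inl ⟨k + 1, rfl⟩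
      · exact .inr ⟨k + 1, d, r, hd, rfl⟩
    · exact .inr ⟨0, a, l, ha, rfl⟩

theorem rotate_one_replicate_succ_append_cons (c d : α) (k : ℕ) (r : List α) :
    (replicate (k + 1) c ++ d :: r).rotate 1 = replicate k c ++ d :: (r ++ [c]) := by
  rw [replicate_succ, cons_append, rotate_cons_succ, rotate_zero, append_assoc, cons_append]

theorem conj_succ {T : List α} {i : ℕ} (hi : 1 ≤ i) : conj T (i + 1) = (conj T i).rotate 1 := by
  rw [conj, conj, rotate_rotate, Nat.sub_add_cancel hi, Nat.add_sub_cancel]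

theorem exists_conj_eq_cyc_cons {T : List α} (hT : T ≠ []) (i : ℕ) :
    ∃ t, conj T i = cyc T hT i :: t := by
  refine ⟨(conj T i).tail, ?_⟩
  conv_lhs => rw [← cons_head_tail (conj_ne_nil hT i)]
  simp [head_eq_getElem, conj, getElem_rotate, cyc, omegaSeq]

theorem omegaSeq_of_lt {S : List α} (hS : S ≠ []) {n : ℕ} (hn : n < S.length) :
    omegaSeq S hS n = S[n] := by
  simp [omegaSeq, Nat.mod_eq_of_lt hn]

theorem omegaSeq_singleton (c : α) (n : ℕ) : omegaSeq [c] (cons_ne_nil c []) n = c := by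
  simp [omegaSeq]

theorem omegaSeq_replicate_append_cons_of_lt {c d : α} {k m : ℕ} {r : List α} (hm : m < k) :
    omegaSeq (replicate k c ++ d :: r) (by simp) m = c := by
  rw [omegaSeq_of_lt _ (by simp; omega), getElem_append_left (by simpa using hm),
    getElem_replicate]

theorem omegaSeq_replicate_append_cons_self {c d : α} {k : ℕ} {r : List α} :
    omegaSeq (replicate k c ++ d :: r) (by simp) k = d := by
  rw [omegaSeq_of_lt _ (by simp), getElem_append_right (by simp)]
  simp

variable [LinearOrder α]

theorem append_lt_append_left_iff (s : List α) {l₁ l₂ : List α} :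
    s ++ l₁ < s ++ l₂ ↔ l₁ < l₂ := by
  induction s with
  | nil => rfl
  | cons a s ih => simpa only [cons_append, cons_lt_cons_self] using ih

theorem rotate_one_replicate_succ_append_cons_lt_iff {c d : α} (hd : d ≠ c) (k : ℕ)
    (r : List α) :
    (replicate (k + 1) c ++ d :: r).rotate 1 < replicate (k + 1) c ++ d :: r ↔ d < c := by
  rw [rotate_one_replicate_succ_append_cons]
  simp only [replicate_succ', append_assoc, singleton_append, append_lt_append_left_iff,
    cons_lt_cons_iff, hd, false_and, or_false]

theorem lt_rotate_one_replicate_succ_append_cons_iff {c d : α} (hd : d ≠ c) (k : ℕ)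
    (r : List α) :
    replicate (k + 1) c ++ d :: r < (replicate (k + 1) c ++ d :: r).rotate 1 ↔ c < d := by
  rw [rotate_one_replicate_succ_append_cons]
  simp only [replicate_succ', append_assoc, singleton_append, append_lt_append_left_iff,
    cons_lt_cons_iff, hd.symm, false_and, or_false]

theorem replicate_append_cons_omegaLt_singleton {c d : α} (hd : d < c) (k : ℕ) (r : List α) :
    OmegaLt (replicate k c ++ d :: r) [c] :=
  ⟨by simp, cons_ne_nil c [], .inr ⟨k,
    fun _ hm => by rw [omegaSeq_replicate_append_cons_of_lt hm, omegaSeq_singleton],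
    by rwa [omegaSeq_replicate_append_cons_self, omegaSeq_singleton]⟩⟩

theorem singleton_omegaLt_replicate_append_cons {c d : α} (hd : c < d) (k : ℕ) (r : List α) :
    OmegaLt [c] (replicate k c ++ d :: r) :=
  ⟨cons_ne_nil c [], by simp, .inr ⟨k,
    fun _ hm => by rw [omegaSeq_replicate_append_cons_of_lt hm, omegaSeq_singleton],
    by rwa [omegaSeq_replicate_append_cons_self, omegaSeq_singleton]⟩⟩

theorem cons_omegaLt_singleton_of_rotate_one_lt {c : α} {t : List α}
    (h : (c :: t).rotate 1 < c :: t) : OmegaLt (c :: t) [c] := by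
  rcases eq_replicate_or_eq_replicate_append_cons_of_ne c t with ⟨k, rfl⟩ | ⟨k, d, r, hd, rfl⟩
  · rw [← replicate_succ, rotate_replicate] at h
    exact absurd h (List.lt_irrefl _)
  · exact replicate_append_cons_omegaLt_singleton
      ((rotate_one_replicate_succ_append_cons_lt_iff hd k r).1 h) (k + 1) r

theorem singleton_omegaLt_cons_of_lt_rotate_one {c : α} {t : List α}
    (h : c :: t < (c :: t).rotate 1) : OmegaLt [c] (c :: t) := by
  rcases eq_replicate_or_eq_replicate_append_cons_of_ne c t with ⟨k, rfl⟩ | ⟨k, d, r, hd, rfl⟩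
  · rw [← replicate_succ, rotate_replicate] at h
    exact absurd h (List.lt_irrefl _)
  · exact singleton_omegaLt_replicate_append_cons
      ((lt_rotate_one_replicate_succ_append_cons_iff hd k r).1 h) (k + 1) r

end Words

theorem omegaLt_of_lType_sType_char_general {α : Type*} [LinearOrder α] (U V : List α)
    (hU : IsPrimitiveStr U) (hV : IsPrimitiveStr V)
    (i j : ℕ) (hi1 : 1 ≤ i) (hj1 : 1 ≤ j)
    (c : α) (hUc : cyc U hU.1 i = c) (hVc : cyc V hV.1 j = c)
    (hL : LType U i) (hS : SType V j) :
    OmegaLt (conj U i) [c] ∧ OmegaLt [c] (conj V j) := by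
  obtain ⟨s, hs⟩ := exists_conj_eq_cyc_cons hU.1 i
  obtain ⟨t, ht⟩ := exists_conj_eq_cyc_cons hV.1 j
  rw [hUc] at hs
  rw [hVc] at ht
  rw [LType, LexLt, lex_lt, conj_succ hi1, hs] at hL
  rw [SType, LexLt, lex_lt, conj_succ hj1, ht] at hS
  rw [hs, ht]
  exact ⟨cons_omegaLt_singleton_of_rotate_one_lt hL, singleton_omegaLt_cons_of_lt_rotate_one hS⟩

/-- For primitive strings `U`, `V` of length `≥ 2`, positions
`1 ≤ i ≤ |U|`, `1 ≤ j ≤ |V|` with `U[i] = V[j] = c`, if `i` is cyclic L-type in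
`U` and `j` is cyclic S-type in `V`, then `conj_i(U) ≺_ω c ≺_ω conj_j(V)`,
where `c` is regarded as a string of length 1. -/
theorem omegaLt_of_lType_sType_char {α : Type*} [LinearOrder α] (U V : List α)
    (hU : IsPrimitiveStr U) (hV : IsPrimitiveStr V)
    (hU2 : 2 ≤ U.length) (hV2 : 2 ≤ V.length)
    (i j : ℕ) (hi1 : 1 ≤ i) (hi2 : i ≤ U.length) (hj1 : 1 ≤ j) (hj2 : j ≤ V.length)
    (c : α) (hUc : cyc U hU.1 i = c) (hVc : cyc V hV.1 j = c)
    (hL : LType U i) (hS : SType V j) :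
    OmegaLt (conj U i) [c] ∧ OmegaLt [c] (conj V j) :=
  omegaLt_of_lType_sType_char_general U V hU hV i j hi1 hj1 c hUc hVc hL hS
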